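/- arXiv:2109.13698 — 3 statements merged into one kernel-verified Lean document; each statement's English description precedes it below -/
import Mathlib

section
/- Let X_1, X_2, … be i.i.d. real random variables whose common logarithmic moment generating function Λ(t) = log E[exp(t X_1)] is finite for all t ∈ ℝ, and let I(x) = sup_{t ∈ ℝ} (t x − Λ(t)) be the Cramér rate function. Then for every n ≥ 1 and every x ≥ E[X_1], P(X_1 + ⋯ + X_n ≥ n x) ≤ exp(−n I(x)). -/
/-!
For `t ≥ 0`, Chernoff's bound (Markov's inequality for `exp (t S)`) gives
`P(S ≥ n x) ≤ exp (-(n (t x - Λ t)))`, because independence and identical distribution make the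
cumulant generating function of `S = X 0 + ⋯ + X (n-1)` equal to `n Λ`. For `t < 0` the same
bound holds trivially: by Jensen, `Λ t ≥ t E[X 0] ≥ t x`, so the right-hand side is at least `1`.
Taking the infimum over `t` turns the bound into `exp (-(n I x))`.
-/

open MeasureTheory ProbabilityTheory
open scoped ENNReal

/-- The Cramér rate function `I(x) = ⨆ t, (t x - Λ(t))`, as a function `ℝ → [0, ∞] ⊆ EReal`,
where `Λ = cgf X μ` is the logarithmic moment generating function `t ↦ log E[exp (t X)]`. -/
noncomputable def cramerRate {Ω : Type*} [MeasurableSpace Ω] (X : Ω → ℝ) (μ : Measure Ω)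
    (x : ℝ) : EReal :=
  ⨆ t : ℝ, ((t * x - cgf X μ t : ℝ) : EReal)

lemma EReal.le_exp_neg_mul_iSup {ι : Sort*} [Nonempty ι] {p : ℝ≥0∞} {c : ℝ} (hc : 0 ≤ c)
    {f : ι → ℝ} (h : ∀ i, p ≤ ENNReal.ofReal (Real.exp (-(c * f i)))) :
    p ≤ EReal.exp (-((c : EReal) * ⨆ i, (f i : EReal))) := by
  rcases hc.eq_or_lt with rfl | hc
  · simpa using h (Classical.arbitrary ι)
  have hc' : (0 : EReal) < c := EReal.coe_pos.mpr hc
  rw [← ENNReal.exp_log p, EReal.exp_le_exp_iff]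
  refine EReal.le_neg_of_le_neg ?_
  rw [mul_comm, ← EReal.le_div_iff_mul_le hc' (EReal.coe_ne_top c)]
  refine iSup_le fun i => ?_
  rw [EReal.le_div_iff_mul_le hc' (EReal.coe_ne_top c)]
  refine EReal.le_neg_of_le_neg ?_
  calc ENNReal.log p ≤ ENNReal.log (ENNReal.ofReal (Real.exp (-(c * f i)))) :=
        ENNReal.log_monotone (h i)
    _ = -(f i * c) := by
        rw [← EReal.exp_coe, EReal.log_exp, mul_comm]; norm_cast

namespace ProbabilityTheory

section
variable {Ω Ω' : Type*} [MeasurableSpace Ω] [MeasurableSpace Ω'] {μ : Measure Ω}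
  {μ' : Measure Ω'} {X : Ω → ℝ} {t : ℝ}

lemma IdentDistrib.integrable_exp_mul {Y : Ω' → ℝ} (h : IdentDistrib X Y μ μ')
    (hY : Integrable (fun ω => Real.exp (t * Y ω)) μ') :
    Integrable (fun ω => Real.exp (t * X ω)) μ :=
  (h.comp (measurable_const_mul t).exp).integrable_iff.mpr hY

lemma mul_integral_le_cgf [IsProbabilityMeasure μ] (hX : Integrable X μ)
    (h_int : Integrable (fun ω => Real.exp (t * X ω)) μ) : t * μ[X] ≤ cgf X μ t := by
  have jensen : Real.exp (t * μ[X]) ≤ mgf X μ t := by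
    rw [← integral_const_mul]
    exact convexOn_exp.map_integral_le Real.continuous_exp.continuousOn isClosed_univ
      (ae_of_all _ fun _ => Set.mem_univ _) (hX.const_mul t) h_int
  rwa [cgf, Real.le_log_iff_exp_le (mgf_pos h_int)]

lemma measure_ge_le_exp_cgf_of_integral_le [IsProbabilityMeasure μ] {ε : ℝ}
    (hX : Integrable X μ) (h_int : Integrable (fun ω => Real.exp (t * X ω)) μ)
    (hε : μ[X] ≤ ε) :
    μ.real {ω | ε ≤ X ω} ≤ Real.exp (-t * ε + cgf X μ t) := by
  rcases le_or_gt 0 t with ht | ht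
  · exact measure_ge_le_exp_cgf ε ht h_int
  · have h_exponent : 0 ≤ -t * ε + cgf X μ t := by
      nlinarith [mul_integral_le_cgf hX h_int]
    calc μ.real {ω | ε ≤ X ω} ≤ 1 := measureReal_le_one
      _ ≤ Real.exp (-t * ε + cgf X μ t) := Real.one_le_exp h_exponent

end

section
variable {Ω ι : Type*} [MeasurableSpace Ω] {μ : Measure Ω} {X : ι → Ω → ℝ} {t : ℝ}
  {s : Finset ι} {j : ι}

lemma integral_sum_of_identDistrib (hident : ∀ i ∈ s, IdentDistrib (X i) (X j) μ μ)
    (hX : Integrable (X j) μ) :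
    ∫ ω, (∑ i ∈ s, X i) ω ∂μ = s.card * ∫ ω, X j ω ∂μ := by
  simp_rw [Finset.sum_apply]
  rw [integral_finsetSum s fun i hi => (hident i hi).integrable_iff.mpr hX,
    Finset.sum_congr rfl fun i hi => (hident i hi).integral_eq, Finset.sum_const, nsmul_eq_mul]

lemma iIndepFun.cgf_sum_of_identDistrib (h_indep : iIndepFun X μ)
    (h_meas : ∀ i, Measurable (X i)) (hident : ∀ i ∈ s, IdentDistrib (X i) (X j) μ μ)
    (h_int : Integrable (fun ω => Real.exp (t * X j ω)) μ) :
    cgf (∑ i ∈ s, X i) μ t = s.card * cgf (X j) μ t := by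
  have hcgf : ∀ i ∈ s, cgf (X i) μ t = cgf (X j) μ t := fun i hi => by
    rw [cgf, cgf, mgf_congr_identDistrib (hident i hi)]
  rw [h_indep.cgf_sum h_meas fun i hi => (hident i hi).integrable_exp_mul h_int,
    Finset.sum_congr rfl hcgf, Finset.sum_const, nsmul_eq_mul]

end

end ProbabilityTheory

theorem measure_sum_ge_le_exp_neg_rate_general {Ω : Type*} [MeasurableSpace Ω]
    (μ : Measure Ω) [IsProbabilityMeasure μ] (X : ℕ → Ω → ℝ)
    (hmeas : ∀ i, Measurable (X i))
    (hindep : iIndepFun X μ)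
    (hident : ∀ i, IdentDistrib (X i) (X 0) μ μ)
    (hfin : ∀ t : ℝ, Integrable (fun ω => Real.exp (t * X 0 ω)) μ)
    (n : ℕ) (x : ℝ) (hx : μ[X 0] ≤ x) :
    μ {ω | (n : ℝ) * x ≤ ∑ i ∈ Finset.range n, X i ω} ≤
      EReal.exp (-(((n : ℝ) : EReal) * cramerRate (X 0) μ x)) := by
  set S := ∑ i ∈ Finset.range n, X i
  have hident_range : ∀ i ∈ Finset.range n, IdentDistrib (X i) (X 0) μ μ :=
    fun i _ => hident i
  have hX : Integrable (X 0) μ := by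
    simpa using integrable_pow_of_integrable_exp_mul one_ne_zero (hfin 1)
      (by simpa using hfin (-1)) 1
  have hS : Integrable S μ := integrable_finsetSum' _ fun i _ => (hident i).integrable_iff.mpr hX
  have hS_mean : μ[S] ≤ n * x := by
    rw [integral_sum_of_identDistrib hident_range hX, Finset.card_range]
    gcongr
  refine EReal.le_exp_neg_mul_iSup n.cast_nonneg fun t => ?_
  have hS_exp : Integrable (fun ω => Real.exp (t * S ω)) μ :=
    hindep.integrable_exp_mul_sum hmeas fun i _ => (hident i).integrable_exp_mul (hfin t)
  have chernoff := measure_ge_le_exp_cgf_of_integral_le hS hS_exp hS_mean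
  rw [hindep.cgf_sum_of_identDistrib hmeas hident_range (hfin t), Finset.card_range] at chernoff
  rw [← ofReal_measureReal]
  convert ENNReal.ofReal_le_ofReal chernoff using 2
  · simp [S, Finset.sum_apply]
  · congr 1; ring

/-- Chernoff bound: if `X 0, X 1, …` are i.i.d. real random variables whose common logarithmic
moment generating function is finite everywhere, then for every `n ≥ 1` and `x ≥ E[X 0]`,
`P(X 0 + ⋯ + X (n-1) ≥ n x) ≤ exp (- n I x)`, where `I` is the Cramér rate function. -/
theorem measure_sum_ge_le_exp_neg_rate {Ω : Type*} [MeasurableSpace Ω]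
    (μ : Measure Ω) [IsProbabilityMeasure μ] (X : ℕ → Ω → ℝ)
    (hmeas : ∀ i, Measurable (X i))
    (hindep : iIndepFun X μ)
    (hident : ∀ i, IdentDistrib (X i) (X 0) μ μ)
    (hfin : ∀ t : ℝ, Integrable (fun ω => Real.exp (t * X 0 ω)) μ)
    (n : ℕ) (hn : 1 ≤ n) (x : ℝ) (hx : μ[X 0] ≤ x) :
    μ {ω | (n : ℝ) * x ≤ ∑ i ∈ Finset.range n, X i ω} ≤
      EReal.exp (-(((n : ℝ) : EReal) * cramerRate (X 0) μ x)) :=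
  measure_sum_ge_le_exp_neg_rate_general μ X hmeas hindep hident hfin n x hx
end

section
/- Let X_1, X_2, … be i.i.d. real random variables whose common logarithmic moment generating function Λ(t) = log E[exp(t X_1)] is finite for all t ∈ ℝ, and let I(x) = sup_{t ∈ ℝ} (t x − Λ(t)) be the Cramér rate function. Then for every x > E[X_1], liminf_{n → ∞} (1/n) log P(X_1 + ⋯ + X_n ≥ n x) ≥ −I(x). -/
open MeasureTheory ProbabilityTheory Filter
open scoped ENNReal

/-!
If `X ≤ x` almost surely, then `P(S_n ≥ n x) ≥ P(X = x)^n`, and `I(x) = -log P(X = x)` because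
`E[exp (t (X - x))]` decreases to `P(X = x)` as `t → ∞`.

Otherwise `Λ'` is continuous, equals `E[X] < x` at `0` and exceeds `x` at some `ξ > 0`, so for
every `c` slightly above `x` there is `t ∈ [0, ξ]` with `Λ'(t) = c`. Under the measure tilted by
`exp (t S_n)` the mean `S_n / n` concentrates near `c`; rather than constructing that measure we
compare `exp (t S_n)` pointwise with the tilts `exp ((t ± θ) S_n)`, whose masses relative to
`exp (n Λ(t))` decay geometrically because `x < Λ'(t) < z`. Hence
`P(S_n ≥ n x) ≥ exp (n (Λ(t) - t z)) / 2` for large `n`, and `t z - Λ(t)` is within `ε` of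
`t x - Λ(t) ≤ I(x)` since `t ≤ ξ`.
-/

open Real Finset Topology

lemma HasDerivAt.exists_pos_lt_add_mul {f : ℝ → ℝ} {d z t : ℝ} (hf : HasDerivAt f d t)
    (hdz : d < z) : ∃ θ > 0, f (t + θ) < f t + θ * z := by
  obtain ⟨u, hu, hut⟩ := ((hf.hasDerivWithinAt (s := Set.Ioi t)).limsup_slope_le' (lt_irrefl t)
    hdz |>.and self_mem_nhdsWithin).exists
  refine ⟨u - t, sub_pos.2 hut, ?_⟩
  rw [slope_def_field, div_lt_iff₀ (sub_pos.2 hut)] at hu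
  rw [add_sub_cancel]
  linarith

lemma HasDerivAt.exists_pos_lt_sub_mul {f : ℝ → ℝ} {d x t : ℝ} (hf : HasDerivAt f d t)
    (hxd : x < d) : ∃ θ > 0, f (t - θ) < f t - θ * x := by
  have hneg : HasDerivAt (fun u => f (-u)) (-d) (-t) := by
    have hf' : HasDerivAt f d (-(-t)) := by rwa [neg_neg]
    simpa [Function.comp_def] using hf'.comp (-t) (hasDerivAt_neg (-t))
  obtain ⟨θ, hθ, h⟩ := hneg.exists_pos_lt_add_mul (neg_lt_neg hxd)
  refine ⟨θ, hθ, ?_⟩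
  simp only [neg_add, neg_neg, mul_neg] at h
  rwa [← sub_eq_add_neg, ← sub_eq_add_neg] at h

-- The first term dominates on `[a, b]`, the second below `a`, the third above `b`.
lemma exp_mul_le_indicator_add_tilts {t θ θ' a b s : ℝ} (ht : 0 ≤ t) (hθ : 0 ≤ θ)
    (hθ' : 0 ≤ θ') :
    exp (t * s) ≤ (Set.Ici a).indicator (fun _ => exp (t * b)) s
      + exp (θ' * a) * exp ((t - θ') * s) + exp (-(θ * b)) * exp ((t + θ) * s) := by
  simp only [← exp_add]
  have h0 : 0 ≤ (Set.Ici a).indicator (fun _ => exp (t * b)) s :=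
    Set.indicator_nonneg (fun _ _ => (exp_pos _).le) s
  rcases lt_or_ge s a with hsa | has
  · have := exp_le_exp.2 (show t * s ≤ θ' * a + (t - θ') * s by nlinarith)
    linarith [exp_pos (-(θ * b) + (t + θ) * s)]
  rcases lt_or_ge b s with hbs | hsb
  · have := exp_le_exp.2 (show t * s ≤ -(θ * b) + (t + θ) * s by nlinarith)
    linarith [exp_pos (θ' * a + (t - θ') * s)]
  · rw [Set.indicator_of_mem (Set.mem_Ici.2 has)]
    have := exp_le_exp.2 (mul_le_mul_of_nonneg_left hsb ht)
    linarith [exp_pos (θ' * a + (t - θ') * s), exp_pos (-(θ * b) + (t + θ) * s)]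

lemma le_liminf_inv_mul_log_of_eventually_le {P : ℕ → ℝ≥0∞} {C a : ℝ} (hC : 0 < C)
    (h : ∀ᶠ n : ℕ in atTop, ENNReal.ofReal (C * exp (n * a)) ≤ P n) :
    (a : EReal) ≤ liminf (fun n : ℕ => (((n : ℝ)⁻¹ : ℝ) : EReal) * ENNReal.log (P n)) atTop := by
  have hlim : Tendsto (fun n : ℕ => ((a + (n : ℝ)⁻¹ * log C : ℝ) : EReal)) atTop (𝓝 a) := by
    refine EReal.tendsto_coe.2 ?_
    simpa using tendsto_const_nhds.add (tendsto_inv_atTop_nhds_zero_nat.mul_const (log C))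
  rw [← hlim.liminf_eq]
  refine liminf_le_liminf ((h.and (eventually_gt_atTop 0)).mono fun n ⟨hn, hn0⟩ => ?_)
  have hlog : ((log C + n * a : ℝ) : EReal) ≤ ENNReal.log (P n) := by
    rw [← log_exp (n * a), ← log_mul hC.ne' (exp_pos _).ne',
      ← ENNReal.log_ofReal_of_pos (by positivity)]
    exact ENNReal.log_le_log hn
  have hn' : (0 : ℝ) < n := by exact_mod_cast hn0
  calc ((a + (n : ℝ)⁻¹ * log C : ℝ) : EReal) = (((n : ℝ)⁻¹ * (log C + n * a) : ℝ) : EReal) := by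
        congr 1; field_simp; ring
    _ ≤ _ := by
        rw [EReal.coe_mul]
        exact mul_le_mul_of_nonneg_left hlog (by exact_mod_cast (inv_pos.2 hn').le)

lemma log_le_liminf_inv_mul_log_of_pow_le {P : ℕ → ℝ≥0∞} {p : ℝ≥0∞} (h : ∀ n, p ^ n ≤ P n) :
    ENNReal.log p ≤ liminf (fun n : ℕ => (((n : ℝ)⁻¹ : ℝ) : EReal) * ENNReal.log (P n)) atTop := by
  refine le_liminf_of_le (by isBoundedDefault) ((eventually_gt_atTop 0).mono fun n hn => ?_)
  have hn' : (n : ℝ) ≠ 0 := by positivity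
  calc ENNReal.log p = (((n : ℝ)⁻¹ : ℝ) : EReal) * ENNReal.log (p ^ n) := by
        rw [ENNReal.log_pow, ← mul_assoc, ← EReal.coe_coe_eq_natCast, ← EReal.coe_mul,
          inv_mul_cancel₀ hn', EReal.coe_one, one_mul]
    _ ≤ _ := mul_le_mul_of_nonneg_left (ENNReal.log_le_log (h n))
        (by exact_mod_cast inv_nonneg.2 (Nat.cast_nonneg n))

section OneVariable

variable {Ω : Type*} [MeasurableSpace Ω] {μ : Measure Ω} {Y : Ω → ℝ} {x : ℝ}

lemma neg_cramerRate_le (t : ℝ) : -cramerRate Y μ x ≤ ((cgf Y μ t - t * x : ℝ) : EReal) := by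
  rw [EReal.neg_le, ← EReal.coe_neg, neg_sub]
  exact le_iSup (fun t : ℝ => ((t * x - cgf Y μ t : ℝ) : EReal)) t

lemma neg_cramerRate_le_of_forall_pos {L : EReal}
    (h : ∀ ε > 0, ∃ t, ((cgf Y μ t - t * x - ε : ℝ) : EReal) ≤ L) : -cramerRate Y μ x ≤ L := by
  refine EReal.ge_of_forall_gt_iff_ge.1 fun z hz => ?_
  obtain ⟨w, hzw, hw⟩ := EReal.lt_iff_exists_real_btwn.1 hz
  obtain ⟨t, ht⟩ := h (w - z) (sub_pos.2 (EReal.coe_lt_coe_iff.1 hzw))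
  have hwt : w ≤ cgf Y μ t - t * x := EReal.coe_le_coe_iff.1 (hw.le.trans (neg_cramerRate_le t))
  exact le_trans (EReal.coe_le_coe_iff.2 (by linarith)) ht

lemma analyticOnNhd_cgf_univ (hfin : ∀ t : ℝ, Integrable (fun ω => exp (t * Y ω)) μ) :
    AnalyticOnNhd ℝ (cgf Y μ) Set.univ := by
  simpa [integrableExpSet, hfin] using analyticOnNhd_cgf (X := Y) (μ := μ)

lemma mgf_le_measureReal_add_tilts [IsFiniteMeasure μ] {S : Ω → ℝ} (hS : Measurable S)
    (hint : ∀ s, Integrable (fun ω => exp (s * S ω)) μ) {t θ θ' : ℝ} (ht : 0 ≤ t) (hθ : 0 ≤ θ)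
    (hθ' : 0 ≤ θ') (a b : ℝ) :
    mgf S μ t ≤ exp (t * b) * μ.real {ω | a ≤ S ω}
      + exp (θ' * a) * mgf S μ (t - θ') + exp (-(θ * b)) * mgf S μ (t + θ) := by
  have hA : MeasurableSet {ω | a ≤ S ω} := measurableSet_le measurable_const hS
  have h₁ : Integrable (fun ω => {ω | a ≤ S ω}.indicator (fun _ => exp (t * b)) ω) μ :=
    (integrable_const _).indicator hA
  have h₂ : Integrable (fun ω => exp (θ' * a) * exp ((t - θ') * S ω)) μ := (hint _).const_mul _
  have h₃ : Integrable (fun ω => exp (-(θ * b)) * exp ((t + θ) * S ω)) μ := (hint _).const_mul _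
  have h₁₂ : Integrable (fun ω => {ω | a ≤ S ω}.indicator (fun _ => exp (t * b)) ω
      + exp (θ' * a) * exp ((t - θ') * S ω)) μ := h₁.add h₂
  calc mgf S μ t
      ≤ ∫ ω, ({ω | a ≤ S ω}.indicator (fun _ => exp (t * b)) ω
          + exp (θ' * a) * exp ((t - θ') * S ω) + exp (-(θ * b)) * exp ((t + θ) * S ω)) ∂μ :=
        integral_mono (hint t) (h₁₂.add h₃) fun _ => exp_mul_le_indicator_add_tilts ht hθ hθ'
    _ = _ := by
        rw [integral_add h₁₂ h₃, integral_add h₁ h₂, integral_indicator_const _ hA,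
          integral_const_mul, integral_const_mul, smul_eq_mul, mul_comm (μ.real _)]
        rfl

lemma exists_gt_measure_le_ne_zero (h : ¬ ∀ᵐ ω ∂μ, Y ω ≤ x) :
    ∃ y > x, μ {ω | y ≤ Y ω} ≠ 0 := by
  contrapose! h
  have hlt : ∀ᵐ ω ∂μ, ∀ n : ℕ, Y ω < x + 1 / (n + 1) := ae_all_iff.2 fun n => by
    rw [ae_iff]
    simpa using h (x + 1 / (n + 1)) (by linarith [Nat.one_div_pos_of_nat (α := ℝ) (n := n)])
  filter_upwards [hlt] with ω hω
  refine le_of_forall_pos_lt_add fun ε hε => ?_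
  obtain ⟨n, hn⟩ := exists_nat_one_div_lt hε
  linarith [hω n]

variable [IsProbabilityMeasure μ]

lemma neg_cramerRate_le_log_measure_ge (hY : Measurable Y)
    (hfin : ∀ t : ℝ, Integrable (fun ω => exp (t * Y ω)) μ) (hle : ∀ᵐ ω ∂μ, Y ω ≤ x) :
    -cramerRate Y μ x ≤ ENNReal.log (μ {ω | x ≤ Y ω}) := by
  have hconv : Tendsto (fun t : ℝ => ∫ ω, exp (t * (Y ω - x)) ∂μ) atTop
      (𝓝 (μ.real {ω | x ≤ Y ω})) := by
    rw [← integral_indicator_one (measurableSet_le measurable_const hY)]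
    refine tendsto_integral_filter_of_dominated_convergence (fun _ => 1)
      (Eventually.of_forall fun t => by fun_prop)
      ((eventually_ge_atTop 0).mono fun t ht => ?_) (integrable_const 1) ?_
    · filter_upwards [hle] with ω hω
      rw [norm_of_nonneg (exp_pos _).le]
      exact exp_le_one_iff.2 (mul_nonpos_of_nonneg_of_nonpos ht (by linarith))
    · filter_upwards [hle] with ω hω
      rcases hω.lt_or_eq with hlt | heq
      · rw [Set.indicator_of_notMem (show ω ∉ {ω | x ≤ Y ω} from not_le.2 hlt)]
        exact tendsto_exp_atBot.comp (tendsto_id.atTop_mul_const_of_neg (sub_neg.2 hlt))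
      · simp [heq]
  have hexp : ∀ t, ∫ ω, exp (t * (Y ω - x)) ∂μ = exp (cgf Y μ t - t * x) := fun t => by
    simp_rw [mul_sub, exp_sub]
    rw [integral_div, exp_cgf (hfin t)]
    rfl
  have hlog : Tendsto (fun t => ENNReal.log (ENNReal.ofReal (∫ ω, exp (t * (Y ω - x)) ∂μ)))
      atTop (𝓝 (ENNReal.log (μ {ω | x ≤ Y ω}))) := by
    rw [← ofReal_measureReal]
    exact (ENNReal.continuous_log.tendsto _).comp ((ENNReal.continuous_ofReal.tendsto _).comp hconv)
  refine ge_of_tendsto' hlog fun t => ?_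
  rw [hexp, ENNReal.log_ofReal_of_pos (exp_pos _), log_exp]
  exact neg_cramerRate_le t

-- By the Chernoff bound `Λ(T) ≥ T y + log P(Y ≥ y)`, so the slope of `Λ` on `[0, T]` exceeds `x`
-- once `T (y - x) > -log P(Y ≥ y)`.
lemma exists_pos_lt_deriv_cgf (hfin : ∀ t : ℝ, Integrable (fun ω => exp (t * Y ω)) μ)
    (h : ¬ ∀ᵐ ω ∂μ, Y ω ≤ x) : ∃ ξ > 0, x < deriv (cgf Y μ) ξ := by
  obtain ⟨y, hxy, hy⟩ := exists_gt_measure_le_ne_zero h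
  set p := μ.real {ω | y ≤ Y ω}
  have hp : 0 < p := ENNReal.toReal_pos hy (measure_ne_top _ _)
  have hlogp : log p ≤ 0 := log_nonpos hp.le measureReal_le_one
  set T := -log p / (y - x) + 1
  have hT : 0 < T := by
    have : 0 ≤ -log p / (y - x) := div_nonneg (by linarith) (by linarith)
    linarith
  have hTyx : T * (y - x) = -log p + (y - x) := by
    simp only [T]
    field_simp [(sub_pos.2 hxy).ne']
  have hchernoff : log p ≤ -T * y + cgf Y μ T :=
    (log_le_iff_le_exp hp).2 (measure_ge_le_exp_cgf y hT.le (hfin T))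
  have hΛ := analyticOnNhd_cgf_univ hfin
  obtain ⟨ξ, hξ, hslope⟩ := exists_deriv_eq_slope (cgf Y μ) hT
    (hΛ.continuousOn.mono (Set.subset_univ _)) (hΛ.differentiableOn.mono (Set.subset_univ _))
  refine ⟨ξ, hξ.1, ?_⟩
  rw [hslope, cgf_zero, sub_zero, sub_zero, lt_div_iff₀ hT]
  linarith

end OneVariable

section Iid

variable {Ω : Type*} [MeasurableSpace Ω] {μ : Measure Ω} {X : ℕ → Ω → ℝ}

lemma measure_le_pow_le_measure_sum_ge (hindep : iIndepFun X μ)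
    (hident : ∀ i, IdentDistrib (X i) (X 0) μ μ) (x : ℝ) (n : ℕ) :
    μ {ω | x ≤ X 0 ω} ^ n ≤ μ {ω | (n : ℝ) * x ≤ ∑ i ∈ range n, X i ω} := by
  calc μ {ω | x ≤ X 0 ω} ^ n = μ (⋂ i ∈ range n, X i ⁻¹' Set.Ici x) := by
        rw [hindep.meas_biInter fun i _ => ⟨_, measurableSet_Ici, rfl⟩,
          prod_eq_pow_card fun i _ => (hident i).measure_mem_eq measurableSet_Ici, card_range]
        rfl
    _ ≤ _ := measure_mono fun ω hω => by
        simp only [Set.mem_iInter, Set.mem_preimage, Set.mem_Ici] at hω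
        simpa using card_nsmul_le_sum _ _ _ hω

variable [IsProbabilityMeasure μ]

lemma integrable_exp_mul_sum_range_of_identDistrib (hmeas : ∀ i, Measurable (X i))
    (hindep : iIndepFun X μ) (hident : ∀ i, IdentDistrib (X i) (X 0) μ μ)
    (hfin : ∀ t : ℝ, Integrable (fun ω => exp (t * X 0 ω)) μ) (n : ℕ) (s : ℝ) :
    Integrable (fun ω => exp (s * (∑ i ∈ range n, X i) ω)) μ :=
  hindep.integrable_exp_mul_sum hmeas fun i _ =>
    ((hident i).comp (measurable_const_mul s).exp).integrable_iff.2 (hfin s)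

lemma mgf_sum_range_of_identDistrib (hmeas : ∀ i, Measurable (X i))
    (hindep : iIndepFun X μ) (hident : ∀ i, IdentDistrib (X i) (X 0) μ μ)
    (hfin : ∀ t : ℝ, Integrable (fun ω => exp (t * X 0 ω)) μ) (n : ℕ) (s : ℝ) :
    mgf (∑ i ∈ range n, X i) μ s = exp (n * cgf (X 0) μ s) := by
  rw [hindep.mgf_sum hmeas, prod_eq_pow_card fun i _ => mgf_congr_of_identDistrib _ _ (hident i) s,
    card_range, exp_nat_mul, exp_cgf (hfin s)]

lemma eventually_ofReal_le_measure_sum_ge (hmeas : ∀ i, Measurable (X i))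
    (hindep : iIndepFun X μ) (hident : ∀ i, IdentDistrib (X i) (X 0) μ μ)
    (hfin : ∀ t : ℝ, Integrable (fun ω => exp (t * X 0 ω)) μ) {x c t z : ℝ} (ht : 0 ≤ t)
    (hΛ : HasDerivAt (cgf (X 0) μ) c t) (hxc : x < c) (hcz : c < z) :
    ∀ᶠ n : ℕ in atTop, ENNReal.ofReal (2⁻¹ * exp (n * (cgf (X 0) μ t - t * z)))
      ≤ μ {ω | (n : ℝ) * x ≤ ∑ i ∈ range n, X i ω} := by
  set Λ := cgf (X 0) μ
  obtain ⟨θ, hθ, hθz⟩ := hΛ.exists_pos_lt_add_mul hcz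
  obtain ⟨θ', hθ', hθ'x⟩ := hΛ.exists_pos_lt_sub_mul hxc
  set r := exp (Λ (t + θ) - θ * z - Λ t)
  set r' := exp (Λ (t - θ') + θ' * x - Λ t)
  have hsmall : ∀ᶠ n : ℕ in atTop, r' ^ n + r ^ n < 2⁻¹ := by
    have hr : r < 1 := exp_lt_one_iff.2 (by linarith)
    have hr' : r' < 1 := exp_lt_one_iff.2 (by linarith)
    have := (tendsto_pow_atTop_nhds_zero_of_lt_one (exp_pos _).le hr').add
      (tendsto_pow_atTop_nhds_zero_of_lt_one (exp_pos _).le hr)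
    rw [add_zero] at this
    exact this.eventually_lt_const (by norm_num)
  filter_upwards [hsmall] with n hn
  have key := mgf_le_measureReal_add_tilts (S := ∑ i ∈ range n, X i) (by fun_prop)
    (integrable_exp_mul_sum_range_of_identDistrib hmeas hindep hident hfin n) ht hθ.le hθ'.le
    (n * x) (n * z)
  have e₁ : exp (θ' * (n * x)) * exp (n * Λ (t - θ')) = exp (n * Λ t) * r' ^ n := by
    rw [← exp_nat_mul, ← exp_add, ← exp_add]; ring_nf
  have e₂ : exp (-(θ * (n * z))) * exp (n * Λ (t + θ)) = exp (n * Λ t) * r ^ n := by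
    rw [← exp_nat_mul, ← exp_add, ← exp_add]; ring_nf
  have e₃ : exp (n * (Λ t - t * z)) * exp (t * (n * z)) = exp (n * Λ t) := by
    rw [← exp_add]; ring_nf
  simp only [mgf_sum_range_of_identDistrib hmeas hindep hident hfin, Finset.sum_apply] at key
  rw [e₁, e₂] at key
  refine ENNReal.ofReal_le_of_le_toReal ?_
  rw [← measureReal_def, ← mul_le_mul_iff_of_pos_right (exp_pos (t * (n * z)))]
  nlinarith [exp_pos (n * Λ t), pow_nonneg (exp_pos (Λ (t - θ') + θ' * x - Λ t)).le n,
    pow_nonneg (exp_pos (Λ (t + θ) - θ * z - Λ t)).le n]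

lemma neg_cramerRate_le_liminf_of_not_ae_le (hmeas : ∀ i, Measurable (X i))
    (hindep : iIndepFun X μ) (hident : ∀ i, IdentDistrib (X i) (X 0) μ μ)
    (hfin : ∀ t : ℝ, Integrable (fun ω => exp (t * X 0 ω)) μ) {x : ℝ} (hx : μ[X 0] < x)
    (h : ¬ ∀ᵐ ω ∂μ, X 0 ω ≤ x) :
    -cramerRate (X 0) μ x ≤ liminf (fun n : ℕ => (((n : ℝ)⁻¹ : ℝ) : EReal) *
      ENNReal.log (μ {ω | (n : ℝ) * x ≤ ∑ i ∈ range n, X i ω})) atTop := by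
  set Λ := cgf (X 0) μ
  have hΛ : AnalyticOnNhd ℝ Λ Set.univ := analyticOnNhd_cgf_univ hfin
  obtain ⟨ξ, hξ, hxξ⟩ := exists_pos_lt_deriv_cgf hfin h
  refine neg_cramerRate_le_of_forall_pos fun ε hε => ?_
  set δ := min ((deriv Λ ξ - x) / 2) (ε / (2 * ξ))
  have hδ : 0 < δ := lt_min (by linarith) (by positivity)
  have hδξ : x + δ ≤ deriv Λ ξ := by linarith [min_le_left ((deriv Λ ξ - x) / 2) (ε / (2 * ξ))]
  have hδε : 2 * ξ * δ ≤ ε := by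
    have := min_le_right ((deriv Λ ξ - x) / 2) (ε / (2 * ξ))
    rwa [le_div_iff₀ (by positivity), mul_comm] at this
  have hδ0 : deriv Λ 0 ≤ x + δ := by
    rw [deriv_cgf_zero (by simp [integrableExpSet, hfin])]
    simp only [probReal_univ, div_one]
    linarith
  obtain ⟨t, ⟨ht, htξ⟩, htδ⟩ :=
    intermediate_value_Icc hξ.le (hΛ.deriv.continuousOn.mono (Set.subset_univ _)) ⟨hδ0, hδξ⟩
  have hderiv : HasDerivAt Λ (x + δ) t := htδ ▸ (hΛ t trivial).differentiableAt.hasDerivAt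
  refine ⟨t, le_trans ?_ (le_liminf_inv_mul_log_of_eventually_le (by norm_num)
    (eventually_ofReal_le_measure_sum_ge hmeas hindep hident hfin ht hderiv
      (lt_add_of_pos_right x hδ) (by linarith : x + δ < x + 2 * δ)))⟩
  exact EReal.coe_le_coe_iff.2 (by nlinarith)

end Iid

/-- Cramér lower bound for tails: if `X 0, X 1, …` are i.i.d. real random variables whose common
logarithmic moment generating function is finite everywhere, then for every `x > E[X 0]`,
`liminf_n (1/n) log P(X 0 + ⋯ + X (n-1) ≥ n x) ≥ - I x`, where `I` is the Cramér rate function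
(logarithms of probabilities are taken in `EReal` via `ENNReal.log`). -/
theorem liminf_log_measure_sum_ge {Ω : Type*} [MeasurableSpace Ω]
    (μ : Measure Ω) [IsProbabilityMeasure μ] (X : ℕ → Ω → ℝ)
    (hmeas : ∀ i, Measurable (X i))
    (hindep : iIndepFun X μ)
    (hident : ∀ i, IdentDistrib (X i) (X 0) μ μ)
    (hfin : ∀ t : ℝ, Integrable (fun ω => Real.exp (t * X 0 ω)) μ)
    (x : ℝ) (hx : μ[X 0] < x) :
    -(cramerRate (X 0) μ x) ≤
      liminf (fun n : ℕ =>
        (((n : ℝ)⁻¹ : ℝ) : EReal) *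
          ENNReal.log (μ {ω | (n : ℝ) * x ≤ ∑ i ∈ Finset.range n, X i ω})) atTop := by
  by_cases hdeg : ∀ᵐ ω ∂μ, X 0 ω ≤ x
  · exact (neg_cramerRate_le_log_measure_ge (hmeas 0) hfin hdeg).trans
      (log_le_liminf_inv_mul_log_of_pow_le (measure_le_pow_le_measure_sum_ge hindep hident x))
  · exact neg_cramerRate_le_liminf_of_not_ae_le hmeas hindep hident hfin hx hdeg
end

section
/- (Exponential tilting identity for the rate function) Let X be a real random variable with logarithmic moment generating function Λ(t) = log E[exp(t X)] finite for all t ∈ ℝ. If Λ is differentiable at a point t₀ ∈ ℝ and x = Λ'(t₀), then the Cramér rate function satisfies I(x) = t₀ x − Λ(t₀); that is, the supremum defining I(x) is attained at t₀. -/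
open MeasureTheory ProbabilityTheory
open scoped ENNReal

lemma aux_convexOn_cgf {Ω : Type*} [MeasurableSpace Ω] (μ : Measure Ω) [IsProbabilityMeasure μ]
    (X : Ω → ℝ) (hfin : ∀ t : ℝ, Integrable (fun ω => Real.exp (t * X ω)) μ) :
    ConvexOn ℝ Set.univ (cgf X μ) := by
  refine ⟨convex_univ, fun s _ u _ a b ha hb hab => ?_⟩
  rcases eq_or_lt_of_le ha with ha0 | ha
  · have hb1 : b = 1 := by linarith
    simp [← ha0, hb1]
  rcases eq_or_lt_of_le hb with hb0 | hb
  · have ha1 : a = 1 := by linarith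
    simp [← hb0, ha1]
  have ha1 : a < 1 := by linarith
  have hpq : Real.HolderConjugate (1/a) (1/b) := by
    rw [Real.holderConjugate_iff]; constructor
    · exact one_lt_one_div ha ha1
    · rw [one_div, inv_inv, one_div, inv_inv]; exact hab
  have hmem : ∀ (c t : ℝ), 0 < c →
      MemLp (fun ω => Real.exp (t * X ω) ^ c) (ENNReal.ofReal (1/c)) μ := by
    intro c t hc
    have h1 : MemLp (fun ω => Real.exp (t * X ω)) 1 μ :=
      memLp_one_iff_integrable.mpr (hfin t)
    have h2 := h1.norm_rpow_div (ENNReal.ofReal c)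
    have heq : (fun ω : Ω => ‖Real.exp (t * X ω)‖ ^ (ENNReal.ofReal c).toReal)
        = fun ω => Real.exp (t * X ω) ^ c := by
      funext ω
      rw [Real.norm_of_nonneg (Real.exp_pos _).le, ENNReal.toReal_ofReal hc.le]
    rw [heq] at h2
    have hdiv : (1 : ℝ≥0∞) / ENNReal.ofReal c = ENNReal.ofReal (1/c) := by
      rw [one_div, one_div, ← ENNReal.ofReal_inv_of_pos hc]
    rwa [hdiv] at h2
  have key := integral_mul_le_Lp_mul_Lq_of_nonneg (μ := μ) hpq
    (f := fun ω => Real.exp (s * X ω) ^ a) (g := fun ω => Real.exp (u * X ω) ^ b)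
    (Filter.Eventually.of_forall fun ω => Real.rpow_nonneg (Real.exp_pos _).le _)
    (Filter.Eventually.of_forall fun ω => Real.rpow_nonneg (Real.exp_pos _).le _)
    (hmem a s ha) (hmem b u hb)
  have hsimp : ∀ (c t : ℝ), 0 < c → (fun ω : Ω =>
      (Real.exp (t * X ω) ^ c) ^ (1/c)) = fun ω => Real.exp (t * X ω) := by
    intro c t hc
    funext ω
    rw [← Real.rpow_mul (Real.exp_pos _).le, mul_one_div_cancel hc.ne', Real.rpow_one]
  have hlhs : (fun ω : Ω => Real.exp (s * X ω) ^ a * Real.exp (u * X ω) ^ b)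
      = fun ω => Real.exp ((a * s + b * u) * X ω) := by
    funext ω
    rw [← Real.exp_mul, ← Real.exp_mul, ← Real.exp_add]
    ring_nf
  have key2 : mgf X μ (a * s + b * u) ≤ mgf X μ s ^ a * mgf X μ u ^ b := by
    have h1 : ∫ ω, Real.exp (s * X ω) ^ a * Real.exp (u * X ω) ^ b ∂μ
        = mgf X μ (a * s + b * u) := by
      rw [hlhs]; rfl
    have h2 : ∫ ω, (Real.exp (s * X ω) ^ a) ^ (1/a) ∂μ = mgf X μ s := by
      rw [show (fun ω : Ω => (Real.exp (s * X ω) ^ a) ^ (1/a)) = fun ω => Real.exp (s * X ω)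
        from hsimp a s ha]; rfl
    have h3 : ∫ ω, (Real.exp (u * X ω) ^ b) ^ (1/b) ∂μ = mgf X μ u := by
      rw [show (fun ω : Ω => (Real.exp (u * X ω) ^ b) ^ (1/b)) = fun ω => Real.exp (u * X ω)
        from hsimp b u hb]; rfl
    calc mgf X μ (a * s + b * u) = ∫ ω, Real.exp (s * X ω) ^ a * Real.exp (u * X ω) ^ b ∂μ :=
          h1.symm
      _ ≤ (∫ ω, (Real.exp (s * X ω) ^ a) ^ (1/a) ∂μ) ^ (1/(1/a))
          * (∫ ω, (Real.exp (u * X ω) ^ b) ^ (1/b) ∂μ) ^ (1/(1/b)) := key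
      _ = mgf X μ s ^ a * mgf X μ u ^ b := by
          rw [h2, h3, one_div_one_div, one_div_one_div]
  have hmgf_pos : ∀ t : ℝ, 0 < mgf X μ t := fun t => mgf_pos (hfin t)
  have hrhs_pos : 0 < mgf X μ s ^ a * mgf X μ u ^ b :=
    mul_pos (Real.rpow_pos_of_pos (hmgf_pos s) _) (Real.rpow_pos_of_pos (hmgf_pos u) _)
  have : cgf X μ (a * s + b * u) ≤ Real.log (mgf X μ s ^ a * mgf X μ u ^ b) :=
    Real.log_le_log (hmgf_pos _) key2
  calc cgf X μ (a • s + b • u) ≤ Real.log (mgf X μ s ^ a * mgf X μ u ^ b) := by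
        simpa using this
    _ = a • cgf X μ s + b • cgf X μ u := by
        rw [Real.log_mul (Real.rpow_pos_of_pos (hmgf_pos s) _).ne'
          (Real.rpow_pos_of_pos (hmgf_pos u) _).ne',
          Real.log_rpow (hmgf_pos s), Real.log_rpow (hmgf_pos u)]
        simp [smul_eq_mul, cgf]

/-- Exponential tilting identity: if `X` is a real random variable whose logarithmic moment
generating function `Λ = cgf X μ` is finite for all `t : ℝ`, `Λ` is differentiable at `t₀` with
derivative `x = Λ'(t₀)`, then the supremum defining the Cramér rate function is attained at
`t₀`: `I(x) = t₀ x - Λ(t₀)`. -/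
theorem cramerRate_eq_of_hasDerivAt {Ω : Type*} [MeasurableSpace Ω]
    (μ : Measure Ω) [IsProbabilityMeasure μ] (X : Ω → ℝ) (hX : Measurable X)
    (hfin : ∀ t : ℝ, Integrable (fun ω => Real.exp (t * X ω)) μ)
    (t₀ x : ℝ) (hderiv : HasDerivAt (cgf X μ) x t₀) :
    cramerRate X μ x = ((t₀ * x - cgf X μ t₀ : ℝ) : EReal) := by
  have hconv := aux_convexOn_cgf μ X hfin
  have hle : ∀ t : ℝ, t * x - cgf X μ t ≤ t₀ * x - cgf X μ t₀ := by
    intro t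
    rcases lt_trichotomy t t₀ with h | h | h
    · have hs := hconv.slope_le_of_hasDerivAt (Set.mem_univ t) (Set.mem_univ t₀) h hderiv
      rw [slope_def_field] at hs
      have ht : 0 < t₀ - t := by linarith
      rw [div_le_iff₀ ht] at hs
      nlinarith
    · rw [h]
    · have hs := hconv.le_slope_of_hasDerivAt (Set.mem_univ t₀) (Set.mem_univ t) h hderiv
      rw [slope_def_field] at hs
      have ht : 0 < t - t₀ := by linarith
      rw [le_div_iff₀ ht] at hs
      nlinarith
  rw [cramerRate]
  refine le_antisymm ?_ ?_
  · exact iSup_le fun t => EReal.coe_le_coe_iff.mpr (hle t)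
  · exact le_iSup (fun t : ℝ => ((t * x - cgf X μ t : ℝ) : EReal)) t₀
end
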